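/- If α, β ∈ Σ are orthogonal roots (so the roots in ℝα + ℝβ are exactly ±α, ±β), then the operators B^α_V(λ) and B^β_V(λ) commute: B^α_V(λ) B^β_V(λ) = B^β_V(λ) B^α_V(λ) on any finite-dimensional g-module V. -/

import Mathlib

/- STATEMENT 14 (A₁×A₁-type rank-2 relation): if α, β are orthogonal roots of a simple
Lie algebra g (so that the roots lying in ℝα + ℝβ are exactly ±α, ±β), then on any
finite-dimensional g-module V the operators commute:
  B^α_V(λ) B^β_V(λ) = B^β_V(λ) B^α_V(λ)
as rational End(V)-valued functions of λ (stated on each weight space V[ν]; both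
operators act on V[ν] by `p((λ+ν/2,γ^∨)−1; H_γ, E_γ, F_γ)` and preserve weights).

`hs` is the real form of the Cartan subalgebra (an inner product space) containing the
roots; the Lie algebra g acts on V through `ρ`; `eg γ = e_γ` (normalized by
`(e_γ,e_{−γ}) = 1`, so `[e_γ, e_{−γ}] = ((γ,γ)/2) H_γ`), `hg γ = H_γ = γ^∨`,
`E_γ = (2/(γ,γ)) e_γ`, `F_γ = e_{−γ}`. -/

open scoped BigOperators RealInnerProductSpace

noncomputable section

attribute [local instance 100] LieRing.ofAssociativeRing

variable {V : Type*} [AddCommGroup V] [Module ℂ V]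

/-- `p(t; H, E, F) = Σ_k F^k E^k (1/k!) Π_{j=0}^{k-1} (t - H - j)⁻¹`, truncated at
`k = finrank ℂ V` (exact on finite-dimensional modules, where `E` is nilpotent). -/
def pEnd [FiniteDimensional ℂ V] (t : ℂ) (H E F : Module.End ℂ V) : Module.End ℂ V :=
  ∑ k ∈ Finset.range (Module.finrank ℂ V + 1),
    ((Nat.factorial k : ℂ))⁻¹ •
      (F ^ k * E ^ k *
        ((List.range k).map fun j =>
          Ring.inverse (t • (1 : Module.End ℂ V) - H - (j : ℂ) • 1)).prod)

variable {hs : Type*} [NormedAddCommGroup hs] [InnerProductSpace ℝ hs]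
variable {g : Type*} [LieRing g] [LieAlgebra ℂ g]

/-- The argument `(λ + ν/2, γ^∨) − 1` of `p` in the definition of `B^γ_V(λ)` on `V[ν]`. -/
def tval (lam nu γ : hs) : ℂ :=
  ((⟪lam + (1/2 : ℝ) • nu, (2 / ⟪γ, γ⟫ : ℝ) • γ⟫ : ℝ) : ℂ) - 1

/-- The operator `B^γ_V(λ)` on the weight space `V[ν]`:
`p((λ+ν/2,γ^∨)−1; H_γ, E_γ, F_γ)` with `H_γ = hg γ`, `E_γ = (2/(γ,γ)) e_γ`,
`F_γ = e_{−γ}`, all acting through the representation `ρ`. -/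
def Bop [FiniteDimensional ℂ V] (ρ : g →ₗ⁅ℂ⁆ Module.End ℂ V) (eg hg : hs → g)
    (lam nu γ : hs) : Module.End ℂ V :=
  pEnd (tval lam nu γ) (ρ (hg γ)) (((2 / ⟪γ, γ⟫ : ℝ) : ℂ) • ρ (eg γ)) (ρ (eg (-γ)))

/-!
`B^γ_V(λ)` is built from `H_γ`, `E_γ`, `F_γ` by sums, products and inverses, so it commutes
with everything that commutes with these three operators. For orthogonal `α, β` the two
triples commute elementwise: `[H_α, e_{±β}] = 0` since `(α, β) = 0`, and `[e_{±α}, e_{±β}] = 0`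
since `±α ± β` is neither `0` nor a root, having nonzero inner product with both `α` and `β`
while each of `±α, ±β` is orthogonal to one of them.
-/

lemma Commute.ringInverse_right {M₀ : Type*} [MonoidWithZero M₀] {a b : M₀}
    (h : Commute a b) : Commute a (Ring.inverse b) := by
  by_cases hb : IsUnit b
  · obtain ⟨u, rfl⟩ := hb
    rw [Ring.inverse_unit]
    exact h.units_inv_right
  · rw [Ring.inverse_non_unit _ hb]
    exact Commute.zero_right a

lemma commute_pEnd_left [FiniteDimensional ℂ V] {t : ℂ} {H E F b : Module.End ℂ V}
    (hH : Commute H b) (hE : Commute E b) (hF : Commute F b) :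
    Commute (pEnd t H E F) b := by
  refine Commute.sum_left _ _ _ fun k _ => Commute.smul_left ?_ _
  refine ((hF.pow_left k).mul_left (hE.pow_left k)).mul_left ?_
  refine Commute.list_prod_left _ _ fun x hx => ?_
  obtain ⟨j, -, rfl⟩ := List.mem_map.mp hx
  have hshift : Commute b (t • (1 : Module.End ℂ V) - H - (j : ℂ) • 1) :=
    (((Commute.one_right b).smul_right t).sub_right hH.symm).sub_right
      ((Commute.one_right b).smul_right _)
  exact hshift.ringInverse_right.symm

lemma commute_pEnd [FiniteDimensional ℂ V] {t t' : ℂ} {H E F H' E' F' : Module.End ℂ V}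
    (hHH : Commute H H') (hHE : Commute H E') (hHF : Commute H F')
    (hEH : Commute E H') (hEE : Commute E E') (hEF : Commute E F')
    (hFH : Commute F H') (hFE : Commute F E') (hFF : Commute F F') :
    Commute (pEnd t H E F) (pEnd t' H' E' F') :=
  commute_pEnd_left
    (commute_pEnd_left hHH.symm hHE.symm hHF.symm).symm
    (commute_pEnd_left hEH.symm hEE.symm hEF.symm).symm
    (commute_pEnd_left hFH.symm hFE.symm hFF.symm).symm

lemma LieHom.commute_of_lie_eq_zero {R L A : Type*} [CommRing R] [LieRing L] [LieAlgebra R L]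
    [Ring A] [Algebra R A] (ρ : L →ₗ⁅R⁆ A) {x y : L} (h : ⁅x, y⁆ = 0) :
    Commute (ρ x) (ρ y) := by
  rw [commute_iff_lie_eq, ← ρ.map_lie, h, map_zero]

section OrthogonalRoots

variable {α β γ δ : hs}

lemma inner_ne_zero_of_eq_or_eq_neg (hα : α ≠ 0) (hγ : γ = α ∨ γ = -α) : ⟪α, γ⟫ ≠ 0 := by
  rcases hγ with rfl | rfl <;> simpa [inner_neg_right] using hα

lemma inner_eq_zero_of_eq_or_eq_neg (horth : ⟪β, α⟫ = 0) (hγ : γ = α ∨ γ = -α) :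
    ⟪β, γ⟫ = 0 := by
  rcases hγ with rfl | rfl <;> simp [inner_neg_right, horth]

lemma mem_span_pair_of_eq_or_eq_neg (hγ : γ = α ∨ γ = -α) :
    γ ∈ Submodule.span ℝ ({α, β} : Set hs) := by
  have hα : α ∈ Submodule.span ℝ ({α, β} : Set hs) := Submodule.subset_span (by simp)
  rcases hγ with rfl | rfl
  exacts [hα, Submodule.neg_mem _ hα]

lemma add_ne_zero_and_notMem_roots_of_orthogonal {roots : Finset hs}
    (hplane : ∀ γ ∈ roots, γ ∈ Submodule.span ℝ ({α, β} : Set hs) →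
      γ = α ∨ γ = β ∨ γ = -α ∨ γ = -β)
    (horth : ⟪α, β⟫ = 0) (hα : α ≠ 0) (hβ : β ≠ 0)
    (hγ : γ = α ∨ γ = -α) (hδ : δ = β ∨ δ = -β) :
    γ + δ ≠ 0 ∧ γ + δ ∉ roots := by
  have hβα : ⟪β, α⟫ = 0 := by rwa [real_inner_comm]
  have hαsum : ⟪α, γ + δ⟫ ≠ 0 := by
    rw [inner_add_right, inner_eq_zero_of_eq_or_eq_neg horth hδ, add_zero]
    exact inner_ne_zero_of_eq_or_eq_neg hα hγ
  have hβsum : ⟪β, γ + δ⟫ ≠ 0 := by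
    rw [inner_add_right, inner_eq_zero_of_eq_or_eq_neg hβα hγ, zero_add]
    exact inner_ne_zero_of_eq_or_eq_neg hβ hδ
  refine ⟨fun h => hαsum (by rw [h, inner_zero_right]), fun hmem => ?_⟩
  have hspan : γ + δ ∈ Submodule.span ℝ ({α, β} : Set hs) :=
    Submodule.add_mem _ (mem_span_pair_of_eq_or_eq_neg hγ)
      (by rw [Set.pair_comm]; exact mem_span_pair_of_eq_or_eq_neg hδ)
  rcases hplane _ hmem hspan with h | h | h | h
  · exact hβsum (inner_eq_zero_of_eq_or_eq_neg hβα (Or.inl h))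
  · exact hαsum (inner_eq_zero_of_eq_or_eq_neg horth (Or.inl h))
  · exact hβsum (inner_eq_zero_of_eq_or_eq_neg hβα (Or.inr h))
  · exact hαsum (inner_eq_zero_of_eq_or_eq_neg horth (Or.inr h))

end OrthogonalRoots

theorem stmt14_general [FiniteDimensional ℂ V]
    (ρ : g →ₗ⁅ℂ⁆ Module.End ℂ V)
    (roots : Finset hs) (hroot0 : (0 : hs) ∉ roots)
    (α β : hs) (hα : α ∈ roots) (hβ : β ∈ roots)
    (horth : ⟪α, β⟫ = (0 : ℝ))
    (hneg : ∀ γ ∈ roots, -γ ∈ roots)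
    -- the roots lying in ℝα + ℝβ are exactly ±α, ±β
    (hplane : ∀ γ ∈ roots, γ ∈ Submodule.span ℝ ({α, β} : Set hs) →
      γ = α ∨ γ = β ∨ γ = -α ∨ γ = -β)
    -- root vectors, coroots, and the structure constants of g
    (eg : hs → g) (hg : hs → g)
    (hcartan : ∀ γ δ : hs, ⁅hg γ, hg δ⁆ = 0)
    (hwt : ∀ γ δ, γ ∈ roots → δ ∈ roots →
      ⁅hg γ, eg δ⁆ = ((2 * ⟪γ, δ⟫ / ⟪γ, γ⟫ : ℝ) : ℂ) • eg δ)
    (heeNR : ∀ γ δ, γ ∈ roots → δ ∈ roots → γ + δ ≠ 0 → γ + δ ∉ roots → ⁅eg γ, eg δ⁆ = 0)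
    -- the weight ν and a weight vector v ∈ V[ν]
    (lam nu : hs) (v : V) :
    (Bop ρ eg hg lam nu α * Bop ρ eg hg lam nu β) v =
    (Bop ρ eg hg lam nu β * Bop ρ eg hg lam nu α) v := by
  have hα0 : α ≠ 0 := ne_of_mem_of_not_mem hα hroot0
  have hβ0 : β ≠ 0 := ne_of_mem_of_not_mem hβ hroot0
  have hβα : ⟪β, α⟫ = 0 := by rwa [real_inner_comm]
  have hmem : ∀ {γ δ}, δ ∈ roots → (γ = δ ∨ γ = -δ) → γ ∈ roots := fun hδ hγ =>
    hγ.elim (· ▸ hδ) (· ▸ hneg _ hδ)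
  have hHE : ∀ {γ δ}, γ ∈ roots → δ ∈ roots → ⟪γ, δ⟫ = 0 →
      Commute (ρ (hg γ)) (ρ (eg δ)) := fun hγ hδ h0 =>
    ρ.commute_of_lie_eq_zero (by simp [hwt _ _ hγ hδ, h0])
  have hEE : ∀ {γ δ}, (γ = α ∨ γ = -α) → (δ = β ∨ δ = -β) →
      Commute (ρ (eg γ)) (ρ (eg δ)) := fun hγ hδ =>
    have ⟨hsum0, hsum⟩ := add_ne_zero_and_notMem_roots_of_orthogonal hplane horth hα0 hβ0 hγ hδ
    ρ.commute_of_lie_eq_zero (heeNR _ _ (hmem hα hγ) (hmem hβ hδ) hsum0 hsum)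
  have key : Commute (Bop ρ eg hg lam nu α) (Bop ρ eg hg lam nu β) := by
    refine commute_pEnd (ρ.commute_of_lie_eq_zero (hcartan α β))
      ((hHE hα hβ horth).smul_right _) (hHE hα (hneg _ hβ) ?_)
      ((hHE hβ hα hβα).symm.smul_left _) ((hEE (.inl rfl) (.inl rfl)).smul_right _ |>.smul_left _)
      ((hEE (.inl rfl) (.inr rfl)).smul_left _) (hHE hβ (hneg _ hα) ?_).symm
      ((hEE (.inr rfl) (.inl rfl)).smul_right _) (hEE (.inr rfl) (.inr rfl))
    exacts [inner_eq_zero_of_eq_or_eq_neg horth (.inr rfl),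
      inner_eq_zero_of_eq_or_eq_neg hβα (.inr rfl)]
  rw [key.eq]

theorem stmt14 [FiniteDimensional ℂ V]
    (ρ : g →ₗ⁅ℂ⁆ Module.End ℂ V)
    (roots : Finset hs) (hroot0 : (0 : hs) ∉ roots)
    (α β : hs) (hα : α ∈ roots) (hβ : β ∈ roots)
    (horth : ⟪α, β⟫ = (0 : ℝ))
    (hneg : ∀ γ ∈ roots, -γ ∈ roots)
    -- the roots lying in ℝα + ℝβ are exactly ±α, ±β
    (hplane : ∀ γ ∈ roots, γ ∈ Submodule.span ℝ ({α, β} : Set hs) →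
      γ = α ∨ γ = β ∨ γ = -α ∨ γ = -β)
    -- root vectors, coroots, and the structure constants of g
    (eg : hs → g) (hg : hs → g) (Nco : hs → hs → ℂ)
    (hcartan : ∀ γ δ : hs, ⁅hg γ, hg δ⁆ = 0)
    (hwt : ∀ γ δ, γ ∈ roots → δ ∈ roots →
      ⁅hg γ, eg δ⁆ = ((2 * ⟪γ, δ⟫ / ⟪γ, γ⟫ : ℝ) : ℂ) • eg δ)
    (hee : ∀ γ δ, γ ∈ roots → δ ∈ roots → γ + δ ∈ roots →
      ⁅eg γ, eg δ⁆ = Nco γ δ • eg (γ + δ))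
    (heeNR : ∀ γ δ, γ ∈ roots → δ ∈ roots → γ + δ ≠ 0 → γ + δ ∉ roots → ⁅eg γ, eg δ⁆ = 0)
    (hef : ∀ γ ∈ roots, ⁅eg γ, eg (-γ)⁆ = ((⟪γ, γ⟫ / 2 : ℝ) : ℂ) • hg γ)
    -- the weight ν and a weight vector v ∈ V[ν]
    (lam nu : hs) (v : V)
    (hv : ∀ γ ∈ roots, ρ (hg γ) v = ((2 * ⟪γ, nu⟫ / ⟪γ, γ⟫ : ℝ) : ℂ) • v)
    -- genericity of λ
    (hgen : ∀ γ ∈ ({α, β} : Set hs), ∀ j : ℕ,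
      IsUnit ((tval lam nu γ) • (1 : Module.End ℂ V) - ρ (hg γ) - (j : ℂ) • 1)) :
    (Bop ρ eg hg lam nu α * Bop ρ eg hg lam nu β) v =
    (Bop ρ eg hg lam nu β * Bop ρ eg hg lam nu α) v :=
  stmt14_general ρ roots hroot0 α β hα hβ horth hneg hplane eg hg hcartan hwt heeNR lam nu v

end
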